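/- arXiv:1807.03631 — 4 statements merged into one kernel-verified Lean document; each statement's English description precedes it below -/
import Mathlib

section
/- Let R = MvPolynomial ℕ ℚ with variables x_1, x_2, x_3, …. In R[[t]], set A(t) = Σ_{j≥1} (x_j t^j / j)·(1 − (1−3t)^{−j}), which is a well-defined power series with zero constant term, so exp(A(t)) = Σ_{n≥0} A(t)^n/n! is a well-defined element of R[[t]]. Then the coefficient of t^4 in the power series −(1/3)·(1 − t/2)(1 − 3t/2)(1 − 5t/2)·exp(A(t)) equals the polynomial x_3 − (3/2)·x_1^2 + (5/4)·x_1. (This is the coefficient computation establishing 𝔭_3^# = 𝔭_3 − (3/2)𝔭_1^2 + (5/4)𝔭_1 in the proof of Lemma 2.1(b).) -/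
/-!
Since `u = Σ 3ⁿ tⁿ`, we get `u ^ j = Σ (n + j - 1).choose (j - 1) 3ⁿ tⁿ`, which puts every
coefficient of `A` in closed form. As `t²` divides `A`, only `1 + A + A² / 2` contributes to
`exp A` below degree `6`, so the coefficients of `t ^ n`, `n ≤ 4`, of `exp A` are explicit
polynomials in `x₁, x₂, x₃`, and the claim is a finite linear computation.
-/

namespace PowerSeries

variable {R : Type*} [CommRing R]

theorem eq_rescale_mk_one_of_one_sub_mul_eq_one {c : R} {u : R⟦X⟧}
    (hu : (1 - C c * X) * u = 1) : u = rescale c (mk 1) := by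
  have hinv : (1 - C c * X) * rescale c (mk 1) = 1 := by
    simpa [mul_comm, rescale_X] using congrArg (rescale c) (mk_one_mul_one_sub_eq_one R)
  calc u = ((1 - C c * X) * rescale c (mk 1)) * u := by rw [hinv, one_mul]
    _ = rescale c (mk 1) * ((1 - C c * X) * u) := by ring
    _ = rescale c (mk 1) := by rw [hu, mul_one]

theorem coeff_pow_of_one_sub_mul_eq_one {c : R} {u : R⟦X⟧} (hu : (1 - C c * X) * u = 1)
    {j : ℕ} (hj : 0 < j) (n : ℕ) : coeff n (u ^ j) = c ^ n * (j - 1 + n).choose (j - 1) := by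
  obtain ⟨d, rfl⟩ := Nat.exists_eq_add_of_lt hj
  rw [eq_rescale_mk_one_of_one_sub_mul_eq_one hu, ← map_pow, zero_add,
    mk_one_pow_eq_mk_choose_add, coeff_rescale, coeff_mk]
  simp

theorem coeff_C_mul_X_pow_mul_one_sub_pow {c : R} {u : R⟦X⟧} (hu : (1 - C c * X) * u = 1)
    (a : R) {j : ℕ} (hj : 0 < j) (n : ℕ) :
    coeff n (C a * X ^ j * (1 - u ^ j)) =
      if j < n then -(a * c ^ (n - j) * (n - 1).choose (j - 1)) else 0 := by
  rw [mul_assoc, coeff_C_mul, coeff_X_pow_mul', map_sub, coeff_one,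
    coeff_pow_of_one_sub_mul_eq_one hu hj]
  rcases lt_trichotomy j n with h | rfl | h
  · have : j - 1 + (n - j) = n - 1 := by omega
    simp [h, h.le, Nat.sub_ne_zero_of_lt h, this, mul_assoc]
  · simp
  · simp [h.not_ge, h.not_gt]

theorem coeff_pow_eq_zero_of_X_pow_dvd {φ : R⟦X⟧} {m : ℕ} (hφ : X ^ m ∣ φ) (k : ℕ) {n : ℕ}
    (hn : n < m * k) : coeff n (φ ^ k) = 0 :=
  X_pow_dvd_iff.mp (pow_mul (X : R⟦X⟧) m k ▸ pow_dvd_pow_of_dvd hφ k) n hn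

theorem coeff_sq_of_X_pow_dvd {φ : R⟦X⟧} {m : ℕ} (hφ : X ^ m ∣ φ) :
    coeff (2 * m) (φ ^ 2) = coeff m φ ^ 2 := by
  obtain ⟨ψ, rfl⟩ := hφ
  simp only [mul_pow, ← pow_mul, mul_comm m 2, coeff_X_pow_mul', le_refl, if_true, Nat.sub_self,
    coeff_zero_eq_constantCoeff_apply, map_pow]

theorem coeff_succ_one_sub_C_mul_X_mul (a : R) (φ : R⟦X⟧) (n : ℕ) :
    coeff (n + 1) ((1 - C a * X) * φ) = coeff (n + 1) φ - a * coeff n φ := by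
  rw [sub_mul, one_mul, mul_assoc, map_sub, coeff_C_mul, coeff_succ_X_mul]

variable [Algebra ℚ R]

open Finset in
/-- `exp φ`, provided `constantCoeff φ = 0`: then `φ ^ k` has order `≥ k`, so only `k ≤ n`
contributes to the coefficient of `X ^ n`. -/
noncomputable def expOf (φ : R⟦X⟧) : R⟦X⟧ :=
  mk fun n => ∑ k ∈ range (n + 1), (k.factorial : ℚ)⁻¹ • coeff n (φ ^ k)

open Finset in
theorem coeff_expOf_of_X_sq_dvd {φ : R⟦X⟧} (hφ : X ^ 2 ∣ φ) {m n : ℕ} (hn : n < 2 * m) :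
    coeff n (expOf φ) = ∑ k ∈ range m, (k.factorial : ℚ)⁻¹ • coeff n (φ ^ k) := by
  have hvanish : ∀ k, n < 2 * k → (k.factorial : ℚ)⁻¹ • coeff n (φ ^ k) = 0 := fun k hk => by
    rw [coeff_pow_eq_zero_of_X_pow_dvd hφ k hk, smul_zero]
  rw [expOf, coeff_mk]
  calc ∑ k ∈ range (n + 1), (k.factorial : ℚ)⁻¹ • coeff n (φ ^ k)
      = ∑ k ∈ range (n + 1 + m), (k.factorial : ℚ)⁻¹ • coeff n (φ ^ k) :=
        sum_subset (range_subset_range.mpr (by omega)) fun k _ hk =>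
          hvanish k (by rw [mem_range] at hk; omega)
    _ = ∑ k ∈ range m, (k.factorial : ℚ)⁻¹ • coeff n (φ ^ k) :=
        (sum_subset (range_subset_range.mpr (by omega)) fun k _ hk =>
          hvanish k (by rw [mem_range] at hk; omega)).symm

theorem coeff_expOf_of_X_sq_dvd_of_lt_four {φ : R⟦X⟧} (hφ : X ^ 2 ∣ φ) {n : ℕ} (hn : n < 4) :
    coeff n (expOf φ) = coeff n 1 + coeff n φ := by
  simp [coeff_expOf_of_X_sq_dvd hφ (m := 2) hn, Finset.sum_range_succ]

theorem coeff_four_expOf_of_X_sq_dvd {φ : R⟦X⟧} (hφ : X ^ 2 ∣ φ) :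
    coeff 4 (expOf φ) = coeff 4 φ + (2 : ℚ)⁻¹ • coeff 2 φ ^ 2 := by
  simp [coeff_expOf_of_X_sq_dvd hφ (m := 3) (n := 4) (by norm_num), Finset.sum_range_succ,
    coeff_sq_of_X_pow_dvd hφ]

end PowerSeries

open PowerSeries

/-- The series `A(t)` in closed form: the coefficient of `t ^ n` in
`(x_j t ^ j / j) (1 - (1 - c t) ^ (-j))` is `-c ^ (n - j) (n - 1).choose (j - 1) x_j / j`. -/
noncomputable def seriesA (c : ℚ) : (MvPolynomial ℕ ℚ)⟦X⟧ :=
  mk fun n => -∑ j ∈ Finset.Ico (1 : ℕ) n,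
    (c ^ (n - j) * (n - 1).choose (j - 1) / j : ℚ) • MvPolynomial.X j

theorem eq_seriesA {c : ℚ} {u A : (MvPolynomial ℕ ℚ)⟦X⟧}
    (hu : (1 - C (MvPolynomial.C c) * X) * u = 1)
    (hA : ∀ n, coeff n A = ∑ j ∈ Finset.Icc 1 n,
      coeff n (C (MvPolynomial.C (j : ℚ)⁻¹ * MvPolynomial.X j) * X ^ j * (1 - u ^ j))) :
    A = seriesA c := by
  ext n : 1
  have hIco : (Finset.Icc 1 n).filter (· < n) = Finset.Ico 1 n := by ext; simp; omega
  rw [hA, seriesA, coeff_mk, ← hIco, Finset.sum_filter, ← Finset.sum_neg_distrib]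
  refine Finset.sum_congr rfl fun j hj => ?_
  rw [coeff_C_mul_X_pow_mul_one_sub_pow hu _ (Finset.mem_Icc.mp hj).1]
  split_ifs
  · simp only [MvPolynomial.smul_eq_C_mul, div_eq_mul_inv, map_mul, map_pow, map_natCast]
    ring
  · rw [neg_zero]

theorem coeff_two_seriesA (c : ℚ) : coeff 2 (seriesA c) = -(c • MvPolynomial.X 1) := by
  simp [seriesA]

theorem coeff_three_seriesA (c : ℚ) :
    coeff 3 (seriesA c) = -(c ^ 2 • MvPolynomial.X 1 + c • MvPolynomial.X 2) := by
  simp [seriesA, Finset.sum_Ico_succ_top]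

theorem coeff_four_seriesA (c : ℚ) : coeff 4 (seriesA c) =
    -(c ^ 3 • MvPolynomial.X 1 + (3 * c ^ 2 / 2) • MvPolynomial.X 2 + c • MvPolynomial.X 3) := by
  simp [seriesA, Finset.sum_Ico_succ_top]
  ring

theorem X_sq_dvd_seriesA (c : ℚ) : X ^ 2 ∣ seriesA c := by
  rw [X_pow_dvd_iff]
  intro m hm
  interval_cases m <;> simp [seriesA]

theorem coeff_four_prefactor_mul (E : (MvPolynomial ℕ ℚ)⟦X⟧) :
    coeff 4 (-C (MvPolynomial.C (1 / 3 : ℚ)) * (1 - C (MvPolynomial.C (1 / 2 : ℚ)) * X) *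
      (1 - C (MvPolynomial.C (3 / 2 : ℚ)) * X) * (1 - C (MvPolynomial.C (5 / 2 : ℚ)) * X) * E) =
    -((1 / 3 : ℚ) • coeff 4 E) + (3 / 2 : ℚ) • coeff 3 E - (23 / 12 : ℚ) • coeff 2 E
      + (5 / 8 : ℚ) • coeff 1 E := by
  simp only [neg_mul, mul_assoc, map_neg, coeff_C_mul, coeff_succ_one_sub_C_mul_X_mul,
    MvPolynomial.C_mul', Nat.reduceAdd]
  module

theorem stmt0
    (u A E : PowerSeries (MvPolynomial ℕ ℚ))
    (hu : (1 - 3 * (PowerSeries.X : PowerSeries (MvPolynomial ℕ ℚ))) * u = 1)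
    (hA : ∀ n : ℕ, PowerSeries.coeff (R := MvPolynomial ℕ ℚ) n A =
      ∑ j ∈ Finset.Icc 1 n, PowerSeries.coeff (R := MvPolynomial ℕ ℚ) n
        (PowerSeries.C (R := MvPolynomial ℕ ℚ)
            (MvPolynomial.C ((j : ℚ)⁻¹) * MvPolynomial.X j) *
          (PowerSeries.X : PowerSeries (MvPolynomial ℕ ℚ)) ^ j * (1 - u ^ j)))
    (hE : ∀ n : ℕ, PowerSeries.coeff (R := MvPolynomial ℕ ℚ) n E =
      ∑ k ∈ Finset.range (n + 1),
        MvPolynomial.C ((k.factorial : ℚ)⁻¹) *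
          PowerSeries.coeff (R := MvPolynomial ℕ ℚ) n (A ^ k)) :
    PowerSeries.coeff (R := MvPolynomial ℕ ℚ) 4
      (-(PowerSeries.C (R := MvPolynomial ℕ ℚ) (MvPolynomial.C (1/3 : ℚ))) *
        (1 - PowerSeries.C (R := MvPolynomial ℕ ℚ) (MvPolynomial.C (1/2 : ℚ)) * PowerSeries.X) *
        (1 - PowerSeries.C (R := MvPolynomial ℕ ℚ) (MvPolynomial.C (3/2 : ℚ)) * PowerSeries.X) *
        (1 - PowerSeries.C (R := MvPolynomial ℕ ℚ) (MvPolynomial.C (5/2 : ℚ)) * PowerSeries.X) * E)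
      = MvPolynomial.X 3 - MvPolynomial.C (3/2 : ℚ) * (MvPolynomial.X 1) ^ 2
          + MvPolynomial.C (5/4 : ℚ) * MvPolynomial.X 1 := by
  have hu' : (1 - C (MvPolynomial.C 3) * X) * u = 1 := by
    rwa [map_ofNat MvPolynomial.C, map_ofNat C]
  obtain rfl := eq_seriesA hu' hA
  obtain rfl : E = expOf (seriesA 3) := by
    ext n : 1
    simp only [hE, expOf, coeff_mk, MvPolynomial.C_mul']
  have hdvd := X_sq_dvd_seriesA 3
  rw [coeff_four_prefactor_mul, coeff_four_expOf_of_X_sq_dvd hdvd,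
    coeff_expOf_of_X_sq_dvd_of_lt_four hdvd (n := 3) (by norm_num),
    coeff_expOf_of_X_sq_dvd_of_lt_four hdvd (n := 2) (by norm_num),
    coeff_expOf_of_X_sq_dvd_of_lt_four hdvd (n := 1) (by norm_num),
    X_pow_dvd_iff.mp hdvd 1 (by norm_num), coeff_two_seriesA, coeff_three_seriesA,
    coeff_four_seriesA]
  simp only [coeff_one, MvPolynomial.C_mul', OfNat.ofNat_ne_zero, one_ne_zero, if_false, neg_sq,
    smul_pow]
  module
end

section
/- Let A be an associative unital ℂ-algebra with charged fermions (ψ_k), (ψ*_k) indexed by half-integers k ∈ ℤ + 1/2, and define the neutral fermions φ_m, φ̂_m for m ∈ ℤ. Then for every odd integer n ≥ 1 and every integer m ≥ 1, writing k = m − 1/2, one has the identity in A: (−1)^m · m^n · (φ_m φ_{−m} + φ̂_m φ̂_{−m}) = Σ_{i=0}^{n} C(n,i) · 2^{−i} · ( k^{n−i} · ψ_k ψ*_k − (−k−1)^{n−i} · ψ*_{−k−1} ψ_{−k−1} ), where the powers k^{n−i} and (−k−1)^{n−i} are rational numbers acting as scalars. (This is the mode-by-mode form of Lemma 3.4: summing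 over m > 0 yields E^B_n + Ê^B_n = Σ_{i=0}^{n} C(n,i) 2^{−i} E_{n−i}.) -/
/-!
Since the prefactors of `φ` and `φ̂` square to `1/2` and `-1/2`, in `φ_m φ_{-m} + φ̂_m φ̂_{-m}` the
diagonal terms cancel and the cross terms add up to `(-1)^m (ψ_k ψ*_k + ψ*_{-k-1} ψ_{-k-1})`.
On the right, the binomial theorem sums the scalars to `(1/2 + k)^n = m^n` and
`(1/2 - k - 1)^n = (-m)^n = -m^n`, the last step because `n` is odd.
-/

open Finset

theorem sum_choose_div_two_pow_mul_sub_half_pow {K : Type*} [Field K] (x : K) (n : ℕ) :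
    ∑ i ∈ range (n + 1), (n.choose i : K) / 2 ^ i * (x - 1 / 2) ^ (n - i) = x ^ n := by
  calc ∑ i ∈ range (n + 1), (n.choose i : K) / 2 ^ i * (x - 1 / 2) ^ (n - i)
      = (1 / 2 + (x - 1 / 2)) ^ n := by
        rw [add_pow]
        refine sum_congr rfl fun i _ => ?_
        rw [div_pow, one_pow]
        ring
    _ = x ^ n := by rw [add_sub_cancel]

section NeutralFermions

variable {A : Type*} [Ring A] [Algebra ℂ A]

noncomputable def neutralFermion (ψ ψs : ℤ → A) (m : ℤ) : A :=
  ((Real.sqrt 2 : ℂ))⁻¹ • (ψ (m - 1) + ((-1 : ℂ) ^ m) • ψs (-m - 1))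

noncomputable def neutralFermionHat (ψ ψs : ℤ → A) (m : ℤ) : A :=
  (Complex.I / (Real.sqrt 2 : ℂ)) • (ψ (m - 1) - ((-1 : ℂ) ^ m) • ψs (-m - 1))

theorem inv_sqrt_two_smul_mul_add_I_div_sqrt_two_smul_mul (a b c d : A) (ε : ℂ) :
    ((Real.sqrt 2 : ℂ))⁻¹ • (a + ε • b) * ((Real.sqrt 2 : ℂ))⁻¹ • (c + ε • d) +
      (Complex.I / (Real.sqrt 2 : ℂ)) • (a - ε • b) *
        (Complex.I / (Real.sqrt 2 : ℂ)) • (c - ε • d) = ε • (a * d + b * c) := by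
  have hsq : ((Real.sqrt 2 : ℂ)) * (Real.sqrt 2 : ℂ) = 2 := by
    exact_mod_cast Real.mul_self_sqrt zero_le_two
  have hinv : ((Real.sqrt 2 : ℂ))⁻¹ * ((Real.sqrt 2 : ℂ))⁻¹ = 2⁻¹ := by rw [← mul_inv, hsq]
  have hI : Complex.I / (Real.sqrt 2 : ℂ) * (Complex.I / (Real.sqrt 2 : ℂ)) = -2⁻¹ := by
    rw [div_mul_div_comm, Complex.I_mul_I, hsq, neg_div, one_div]
  simp only [smul_mul_smul_comm, hinv, hI]
  simp only [mul_add, add_mul, mul_sub, sub_mul, smul_mul_assoc, mul_smul_comm]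
  module

theorem neutralFermion_mul_neg_add_neutralFermionHat_mul_neg (ψ ψs : ℤ → A) (m : ℤ) :
    neutralFermion ψ ψs m * neutralFermion ψ ψs (-m) +
        neutralFermionHat ψ ψs m * neutralFermionHat ψ ψs (-m) =
      ((-1 : ℂ) ^ m) • (ψ (m - 1) * ψs (m - 1) + ψs (-m - 1) * ψ (-m - 1)) := by
  have hsign : (-1 : ℂ) ^ (-m) = (-1 : ℂ) ^ m := by rw [zpow_neg, ← inv_zpow, inv_neg, inv_one]
  simp only [neutralFermion, neutralFermionHat, hsign, neg_neg]
  exact inv_sqrt_two_smul_mul_add_I_div_sqrt_two_smul_mul _ _ _ _ _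

end NeutralFermions

theorem stmt6 {A : Type*} [Ring A] [Algebra ℂ A]
    (ψ ψs : ℤ → A)
    (φ φh : ℤ → A)
    (hφ : ∀ m : ℤ, φ m =
      ((Real.sqrt 2 : ℂ))⁻¹ • (ψ (m - 1) + ((-1 : ℂ) ^ m) • ψs (-m - 1)))
    (hφh : ∀ m : ℤ, φh m =
      (Complex.I / (Real.sqrt 2 : ℂ)) • (ψ (m - 1) - ((-1 : ℂ) ^ m) • ψs (-m - 1))) :
    ∀ n : ℕ, Odd n → 1 ≤ n → ∀ m : ℤ, 1 ≤ m →
      ((-1 : ℂ) ^ m * (m : ℂ) ^ n) • (φ m * φ (-m) + φh m * φh (-m)) =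
        ∑ i ∈ Finset.range (n + 1),
          ((n.choose i : ℂ) / 2 ^ i) •
            ((((m : ℂ) - 1/2) ^ (n - i)) • (ψ (m - 1) * ψs (m - 1)) -
              ((-(m : ℂ) - 1/2) ^ (n - i)) • (ψs (-m - 1) * ψ (-m - 1))) := by
  intro n hn _ m _
  obtain rfl : φ = neutralFermion ψ ψs := funext hφ
  obtain rfl : φh = neutralFermionHat ψ ψs := funext hφh
  have hsign : (-1 : ℂ) ^ m * (-1 : ℂ) ^ m = 1 := by
    rw [← mul_zpow, neg_one_mul, neg_neg, one_zpow]
  simp only [smul_sub, smul_smul, sum_sub_distrib, ← sum_smul,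
    sum_choose_div_two_pow_mul_sub_half_pow, hn.neg_pow,
    neutralFermion_mul_neg_add_neutralFermionHat_mul_neg]
  rw [mul_right_comm, hsign, one_mul, neg_smul, sub_neg_eq_add, smul_add]
end

section
/- Let A be an associative unital ℂ-algebra and let charged fermions (ψ_k), (ψ*_k) in A, indexed by half-integers k ∈ ℤ + 1/2, satisfy the canonical anticommutation relations. Define the neutral fermions φ_m for m ∈ ℤ. Then for every nonzero integer m, the element (−1)^m φ_m φ_{−m} is an idempotent: ((−1)^m φ_m φ_{−m})^2 = (−1)^m φ_m φ_{−m}. -/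
/-!
STATEMENT 11. Charged fermions `ψ, ψs : ℤ → A` are indexed by half-integers via
`k = n + 1/2`, and satisfy the canonical anticommutation relations.  The neutral
fermion is `φ m = (1/√2)(ψ_{m-1/2} + (-1)^m ψ*_{-m-1/2})`; in our indexing
`ψ_{m-1/2} = ψ (m-1)` and `ψ*_{-m-1/2} = ψs (-m-1)`.  Conclusion: for every nonzero
integer `m`, the element `(-1)^m φ_m φ_{-m}` is idempotent.
-/
theorem stmt11 {A : Type*} [Ring A] [Algebra ℂ A]
    (ψ ψs : ℤ → A)
    (hψψs : ∀ k l : ℤ, ψ k * ψs l + ψs l * ψ k = if k = l then (1 : A) else 0)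
    (hψψ : ∀ k l : ℤ, ψ k * ψ l + ψ l * ψ k = 0)
    (hψsψs : ∀ k l : ℤ, ψs k * ψs l + ψs l * ψs k = 0)
    (φ : ℤ → A)
    (hφ : ∀ m : ℤ, φ m =
      ((Real.sqrt 2 : ℂ))⁻¹ • (ψ (m - 1) + ((-1 : ℂ) ^ m) • ψs (-m - 1))) :
    ∀ m : ℤ, m ≠ 0 →
      (((-1 : ℂ) ^ m) • (φ m * φ (-m))) * (((-1 : ℂ) ^ m) • (φ m * φ (-m))) =
        ((-1 : ℂ) ^ m) • (φ m * φ (-m)) := by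
  intro m hm
  obtain ⟨ε, hεdef⟩ : ∃ e : ℂ, e = (-1 : ℂ) ^ m := ⟨_, rfl⟩
  rw [← hεdef]
  have hε2 : ε * ε = 1 := by
    rw [hεdef, ← zpow_add₀ (by norm_num : (-1:ℂ) ≠ 0)]
    exact Even.neg_one_zpow ⟨m, rfl⟩
  have hεneg : (-1 : ℂ) ^ (-m) = ε := by
    rw [zpow_neg, ← hεdef, inv_eq_of_mul_eq_one_left hε2]
  have hs : ((Real.sqrt 2 : ℂ))⁻¹ * ((Real.sqrt 2 : ℂ))⁻¹ = 2⁻¹ := by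
    rw [← mul_inv, ← Complex.ofReal_mul, Real.mul_self_sqrt (by norm_num : (0:ℝ) ≤ 2)]
    norm_num
  -- abbreviations
  set a : A := ψ (m - 1) with hadef
  set b : A := ψs (-m - 1) with hbdef
  set c : A := ψ (-m - 1) with hcdef
  set d : A := ψs (m - 1) with hddef
  have hne : m - 1 ≠ -m - 1 := by omega
  have hne' : -m - 1 ≠ m - 1 := by omega
  have haa : a * a = 0 := by
    have h2 : (2:ℂ) • (a * a) = 0 := by rw [two_smul]; exact hψψ (m-1) (m-1)
    simpa using (smul_eq_zero.mp h2).resolve_left (by norm_num)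
  have hcc : c * c = 0 := by
    have h2 : (2:ℂ) • (c * c) = 0 := by rw [two_smul]; exact hψψ (-m-1) (-m-1)
    simpa using (smul_eq_zero.mp h2).resolve_left (by norm_num)
  have hbb : b * b = 0 := by
    have h2 : (2:ℂ) • (b * b) = 0 := by rw [two_smul]; exact hψsψs (-m-1) (-m-1)
    simpa using (smul_eq_zero.mp h2).resolve_left (by norm_num)
  have hdd : d * d = 0 := by
    have h2 : (2:ℂ) • (d * d) = 0 := by rw [two_smul]; exact hψsψs (m-1) (m-1)
    simpa using (smul_eq_zero.mp h2).resolve_left (by norm_num)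
  have hba : b * a = -(a * b) := by
    have h := hψψs (m-1) (-m-1); rw [if_neg hne] at h
    exact eq_neg_of_add_eq_zero_right h
  have hca : c * a = -(a * c) := by
    exact eq_neg_of_add_eq_zero_right (hψψ (m-1) (-m-1))
  have hdc : d * c = -(c * d) := by
    have h := hψψs (-m-1) (m-1); rw [if_neg hne'] at h
    exact eq_neg_of_add_eq_zero_right h
  have hdb : d * b = -(b * d) := by
    exact eq_neg_of_add_eq_zero_right (hψsψs (-m-1) (m-1))
  have hda : d * a = 1 - a * d := by
    have h := hψψs (m-1) (m-1); rw [if_pos rfl] at h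
    exact eq_sub_of_add_eq' h
  have hcb : c * b = 1 - b * c := by
    have h := hψψs (-m-1) (-m-1); rw [if_pos rfl] at h
    exact eq_sub_of_add_eq h
  have hφm : φ m = ((Real.sqrt 2 : ℂ))⁻¹ • (a + ε • b) := by
    rw [hφ m, ← hεdef]
  have hφm' : φ (-m) = ((Real.sqrt 2 : ℂ))⁻¹ • (c + ε • d) := by
    have h := hφ (-m)
    rw [hεneg, neg_neg] at h
    exact h
  have hu2 : φ m * φ m = 0 := by
    rw [hφm]
    simp only [smul_add, mul_add, add_mul, smul_mul_assoc, mul_smul_comm, smul_smul,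
      haa, hbb, hba]
    module
  have huv : φ m * φ (-m) + φ (-m) * φ m = ε • (1 : A) := by
    rw [hφm, hφm']
    simp only [smul_add, mul_add, add_mul, smul_mul_assoc, mul_smul_comm, smul_smul,
      hca, hdc, hdb, hda, hcb]
    match_scalars
    all_goals try ring
    all_goals linear_combination ((2:ℂ)*ε) * hs
  have hvu : φ (-m) * φ m = ε • (1 : A) - φ m * φ (-m) := eq_sub_of_add_eq' huv
  have key : (ε • (φ m * φ (-m))) * (ε • (φ m * φ (-m))) =
      (ε*ε) • (φ m * ((φ (-m) * φ m) * φ (-m))) := by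
    rw [smul_mul_assoc, mul_smul_comm, smul_smul]
    congr 1
    noncomm_ring
  rw [key, hε2, one_smul, hvu, sub_mul, smul_mul_assoc, one_mul, mul_sub, mul_smul_comm,
    show φ m * (φ m * φ (-m) * φ (-m)) = (φ m * φ m) * (φ (-m) * φ (-m)) by noncomm_ring,
    hu2, zero_mul, sub_zero]
end

section
/- Let A be an associative unital ℂ-algebra and let charged fermions (ψ_k), (ψ*_k) in A, indexed by half-integers k ∈ ℤ + 1/2, satisfy the canonical anticommutation relations. Define the neutral fermions φ_m for m ∈ ℤ. Then for all integers m, n, the elements φ_m φ_{−m} and φ_n φ_{−n} commute: (φ_m φ_{−m})(φ_n φ_{−n}) = (φ_n φ_{−n})(φ_m φ_{−m}). -/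
/-!
STATEMENT 13. Charged fermions `ψ, ψs : ℤ → A` are indexed by half-integers via
`k = n + 1/2`, and satisfy the canonical anticommutation relations.  The neutral
fermion is `φ m = (1/√2)(ψ_{m-1/2} + (-1)^m ψ*_{-m-1/2})`; in our indexing
`ψ_{m-1/2} = ψ (m-1)` and `ψ*_{-m-1/2} = ψs (-m-1)`.  Conclusion: the elements
`φ_m φ_{-m}` and `φ_n φ_{-n}` commute for all integers `m, n`.
-/

lemma expand13 {A : Type*} [Ring A] [Algebra ℂ A] (X Y Z W : A) (α β : ℂ) :
    (X + α • Y) * (Z + β • W) + (Z + β • W) * (X + α • Y)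
      = (X * Z + Z * X) + β • (X * W + W * X) + α • (Y * Z + Z * Y)
        + (α * β) • (Y * W + W * Y) := by
  simp only [mul_add, add_mul, smul_add, mul_smul_comm, smul_mul_assoc, smul_smul,
    mul_comm α β]
  abel

lemma comm4 {A : Type*} [Ring A] (x y z w : A)
    (hxz : x * z = -(z * x)) (hxw : x * w = -(w * x))
    (hyz : y * z = -(z * y)) (hyw : y * w = -(w * y)) :
    (x * y) * (z * w) = (z * w) * (x * y) := by
  calc (x * y) * (z * w) = x * (y * z) * w := by noncomm_ring
    _ = x * (-(z * y)) * w := by rw [hyz]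
    _ = -((x * z) * (y * w)) := by noncomm_ring
    _ = -((-(z * x)) * (y * w)) := by rw [hxz]
    _ = (z * x) * (y * w) := by noncomm_ring
    _ = (z * x) * (-(w * y)) := by rw [hyw]
    _ = -(z * (x * w) * y) := by noncomm_ring
    _ = -(z * (-(w * x)) * y) := by rw [hxw]
    _ = (z * w) * (x * y) := by noncomm_ring

theorem stmt13 {A : Type*} [Ring A] [Algebra ℂ A]
    (ψ ψs : ℤ → A)
    (hψψs : ∀ k l : ℤ, ψ k * ψs l + ψs l * ψ k = if k = l then (1 : A) else 0)
    (hψψ : ∀ k l : ℤ, ψ k * ψ l + ψ l * ψ k = 0)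
    (hψsψs : ∀ k l : ℤ, ψs k * ψs l + ψs l * ψs k = 0)
    (φ : ℤ → A)
    (hφ : ∀ m : ℤ, φ m =
      ((Real.sqrt 2 : ℂ))⁻¹ • (ψ (m - 1) + ((-1 : ℂ) ^ m) • ψs (-m - 1))) :
    ∀ m n : ℤ, (φ m * φ (-m)) * (φ n * φ (-n)) = (φ n * φ (-n)) * (φ m * φ (-m)) := by
  have hc : ((Real.sqrt 2 : ℂ))⁻¹ * ((Real.sqrt 2 : ℂ))⁻¹ = (2 : ℂ)⁻¹ := by
    rw [← mul_inv, ← Complex.ofReal_mul, Real.mul_self_sqrt (by norm_num)]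
    norm_num
  have key : ∀ a b : ℤ, φ a * φ b + φ b * φ a
      = if a + b = 0 then ((-1 : ℂ) ^ a) • (1 : A) else 0 := by
    intro a b
    rw [hφ a, hφ b, smul_mul_smul_comm, smul_mul_smul_comm, ← smul_add, hc,
      expand13, hψψ (a-1) (b-1), hψsψs (-a-1) (-b-1), hψψs (a-1) (-b-1),
      add_comm (ψs (-a-1) * ψ (b-1)), hψψs (b-1) (-a-1)]
    by_cases h : a + b = 0
    · have hb : b = -a := by omega
      have h1 : (a : ℤ) - 1 = -b - 1 := by omega
      have h2 : (b : ℤ) - 1 = -a - 1 := by omega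
      rw [if_pos h1, if_pos h2, if_pos h]
      subst hb
      have hpow : (-1 : ℂ) ^ (-a) = (-1 : ℂ) ^ a := by
        rw [zpow_neg]
        refine inv_eq_of_mul_eq_one_left ?_
        rw [← zpow_add₀ (by norm_num : (-1:ℂ) ≠ 0)]
        rw [show a + a = 2 * a by ring, zpow_mul]
        norm_num
      rw [hpow]
      simp only [smul_zero, mul_zero, zero_add, add_zero]
      rw [← add_smul, smul_smul]
      congr 1
      ring
    · have h1 : ¬ ((a : ℤ) - 1 = -b - 1) := by omega
      have h2 : ¬ ((b : ℤ) - 1 = -a - 1) := by omega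
      rw [if_neg h1, if_neg h2, if_neg h]
      simp
  have hsq : ∀ a : ℤ, a ≠ 0 → φ a * φ a = 0 := by
    intro a ha
    have h := key a a
    rw [if_neg (by omega)] at h
    have h2 : (2 : ℂ) • (φ a * φ a) = 0 := by rw [two_smul]; exact h
    rcases smul_eq_zero.mp h2 with h3 | h3
    · exact absurd h3 (by norm_num)
    · exact h3
  have hanti : ∀ a b : ℤ, a + b ≠ 0 → φ a * φ b = -(φ b * φ a) := by
    intro a b hab
    have h := key a b
    rw [if_neg hab] at h
    exact eq_neg_of_add_eq_zero_left h
  intro m n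
  by_cases h1 : m = n
  · rw [h1]
  by_cases h2 : m = -n
  · subst h2
    simp only [neg_neg]
    have hn : n ≠ 0 := by omega
    have s1 : φ n * φ n = 0 := hsq n hn
    have s2 : φ (-n) * φ (-n) = 0 := hsq (-n) (by omega)
    calc (φ (-n) * φ n) * (φ n * φ (-n)) = φ (-n) * (φ n * φ n) * φ (-n) := by
          noncomm_ring
      _ = (φ n * φ (-n)) * (φ (-n) * φ n) := by
          rw [s1]
          have : φ n * φ (-n) * (φ (-n) * φ n) = φ n * (φ (-n) * φ (-n)) * φ n := by
            noncomm_ring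
          rw [this, s2]
          simp
  · exact comm4 _ _ _ _ (hanti m n (by omega)) (hanti m (-n) (by omega))
      (hanti (-m) n (by omega)) (hanti (-m) (-n) (by omega))
end
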